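/- Let 𝓗 be a finite set of subgroups of a finite group G, each of the same prime order p, with |𝓗| ≥ 2. Then any POVM on k copies identifying the coset state from 𝓗 with average success probability at least 2/3 requires k ≥ log|𝓗|/(log p) − log(3/2)/log p; conversely, the pretty good measurement on k copies succeeds with error probability at most 4|𝓗|/p^k, so k = O(log|𝓗|/log p) copies suffice. -/

import Mathlib

noncomputable section

open scoped BigOperators ComplexOrder

open Classical in
/-- The coset state `ρ_H = (1/|G|) ∑_g |gH⟩⟨gH|`; its `(x, y)` entry is
`1/|G|` if `x⁻¹ y ∈ H` and `0` otherwise. -/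
def cosetState {G : Type*} [Group G] [Fintype G] (H : Subgroup G) : Matrix G G ℂ :=
  fun x y => if x⁻¹ * y ∈ H then (1 : ℂ) / (Fintype.card G) else 0

/-- `k`-fold tensor power of a matrix. -/
def tensorPow {n : Type*} [Fintype n] (M : Matrix n n ℂ) (k : ℕ) :
    Matrix (Fin k → n) (Fin k → n) ℂ :=
  fun x y => ∏ i, M (x i) (y i)

/-- Trace norm `‖Y‖₁ = tr √(Yᴴ Y)`. -/
def traceNorm {n : Type*} [Fintype n] [DecidableEq n] (Y : Matrix n n ℂ) : ℝ :=
  (((Matrix.posSemidef_conjTranspose_mul_self Y).1.eigenvectorUnitary.1 *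
      Matrix.diagonal (((↑) : ℝ → ℂ) ∘ Real.sqrt ∘ (Matrix.posSemidef_conjTranspose_mul_self Y).1.eigenvalues) *
      (star (Matrix.posSemidef_conjTranspose_mul_self Y).1.eigenvectorUnitary : Matrix n n ℂ)).trace).re

/-- Operator (spectral) norm of a matrix. -/
def opNorm {n : Type*} [Fintype n] [DecidableEq n] (M : Matrix n n ℂ) : ℝ :=
  ‖Matrix.toEuclideanCLM (𝕜 := ℂ) M‖

/-- Square root of the Moore–Penrose pseudoinverse of a Hermitian matrix
(junk value `0` on non-Hermitian input). -/
def pinvSqrt {n : Type*} [Fintype n] [DecidableEq n] (A : Matrix n n ℂ) : Matrix n n ℂ :=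
  if h : A.IsHermitian then
    h.eigenvectorUnitary.1 *
      Matrix.diagonal (fun i => ((Real.sqrt (h.eigenvalues i))⁻¹ : ℂ)) *
      (star h.eigenvectorUnitary : Matrix n n ℂ)
  else 0

/-!
Write `ρ_H = (|H| / |G|) • P_H`, where `P_H` is the projection onto the functions on `G` that
are constant on the left cosets of `H`. Then `tr (P_H P_K) = |G| |H ⊓ K| / (|H| |K|)`, which is
`|G| / p²` for distinct `H, K` of prime order `p`, since then `H ⊓ K = ⊥`.

Lower bound: for a POVM `M` we have `tr (M_H P_H^{⊗k}) ≤ tr M_H`, and these traces add up to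
`|G|^k`, so the average success probability is at most `p^k / |𝓗|`.

Upper bound: with `S = ∑_K P_K^{⊗k}` and `P = P_H^{⊗k} ≤ S`, the pretty good measurement errs on
`P` by at most `tr (S P) - tr P = ∑_{K ≠ H} tr (P_K P_H)^k`. In an eigenbasis `(μ_i)` of `S` this is
the inequality `(μ_i μ_j)^{-1/2} ≥ 2 - (μ_i + μ_j) / 2` weighted by `|P_ij|²`.
-/

open Matrix

section TensorPow

variable {n : Type*} [Fintype n]

theorem tensorPow_mul (A B : Matrix n n ℂ) (k : ℕ) :
    tensorPow A k * tensorPow B k = tensorPow (A * B) k := by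
  ext x y
  simp only [tensorPow, mul_apply, Fintype.prod_sum, Finset.prod_mul_distrib]

theorem trace_tensorPow (A : Matrix n n ℂ) (k : ℕ) : (tensorPow A k).trace = A.trace ^ k := by
  simp only [← Fin.prod_const, trace, diag, Fintype.prod_sum, tensorPow]

theorem tensorPow_smul (c : ℂ) (A : Matrix n n ℂ) (k : ℕ) :
    tensorPow (c • A) k = c ^ k • tensorPow A k := by
  ext x y
  simp [tensorPow, Finset.prod_mul_distrib]

theorem conjTranspose_tensorPow (A : Matrix n n ℂ) (k : ℕ) :
    (tensorPow A k)ᴴ = tensorPow Aᴴ k := by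
  ext x y
  simp [tensorPow]

theorem IsStarProjection.tensorPow {P : Matrix n n ℂ} (hP : IsStarProjection P)
    (k : ℕ) : IsStarProjection (tensorPow P k) :=
  isStarProjection_iff'.2 ⟨by rw [tensorPow_mul, hP.isIdempotentElem.eq],
    by rw [star_eq_conjTranspose, conjTranspose_tensorPow, ← star_eq_conjTranspose,
      hP.isSelfAdjoint.star_eq]⟩

end TensorPow

section StarProjection

variable {n : Type*} [Fintype n]

theorem IsStarProjection.posSemidef {P : Matrix n n ℂ} (hP : IsStarProjection P) :
    P.PosSemidef := by
  have h := posSemidef_conjTranspose_mul_self P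
  rwa [← star_eq_conjTranspose, hP.isSelfAdjoint.star_eq, hP.isIdempotentElem.eq] at h

theorem trace_mul_le_trace_of_isStarProjection [DecidableEq n] {M P : Matrix n n ℂ}
    (hM : M.PosSemidef) (hP : IsStarProjection P) : (M * P).trace ≤ M.trace := by
  have hQ := hP.one_sub
  have h : M.trace - (M * P).trace = ((1 - P)ᴴ * M * (1 - P)).trace := by
    rw [← star_eq_conjTranspose, hQ.isSelfAdjoint.star_eq, trace_mul_cycle,
      hQ.isIdempotentElem.eq, sub_mul, one_mul, trace_sub, trace_mul_comm P]
  exact sub_nonneg.1 (h ▸ (hM.conjTranspose_mul_mul_same _).trace_nonneg)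

theorem sum_re_trace_mul_le_card [DecidableEq n] {ι : Type*} {s : Finset ι}
    {M P : ι → Matrix n n ℂ} (hM : ∀ i ∈ s, (M i).PosSemidef) (hsum : ∑ i ∈ s, M i = 1)
    (hP : ∀ i ∈ s, IsStarProjection (P i)) :
    ∑ i ∈ s, ((M i * P i).trace).re ≤ Fintype.card n :=
  calc ∑ i ∈ s, ((M i * P i).trace).re
      ≤ ∑ i ∈ s, (M i).trace.re := Finset.sum_le_sum fun i hi =>
        (Complex.le_def.1 (trace_mul_le_trace_of_isStarProjection (hM i hi) (hP i hi))).1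
    _ = Fintype.card n := by rw [← Complex.re_sum, ← trace_sum, hsum, trace_one, Complex.natCast_re]

end StarProjection

theorem two_sub_mul_le_inv_sqrt_mul_inv_sqrt_mul {a b β : ℝ} (hβ : 0 ≤ β) (ha : β ≤ a)
    (hb : β ≤ b) : (2 - (a + b) / 2) * β ≤ (√a)⁻¹ * (√b)⁻¹ * β := by
  rcases hβ.eq_or_lt with rfl | hβ
  · simp
  refine mul_le_mul_of_nonneg_right ?_ hβ.le
  have hsa : 0 < √a := Real.sqrt_pos.2 (hβ.trans_le ha)
  have hsb : 0 < √b := Real.sqrt_pos.2 (hβ.trans_le hb)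
  set t := √a * √b
  have htpos : 0 < t := mul_pos hsa hsb
  have hamgm : t ≤ (a + b) / 2 := by
    nlinarith [Real.sq_sqrt (hβ.le.trans ha), Real.sq_sqrt (hβ.le.trans hb),
      sq_nonneg (√a - √b)]
  have hinv : 2 - t ≤ t⁻¹ := by
    rw [← one_div, le_div_iff₀ htpos]
    nlinarith [sq_nonneg (t - 1)]
  rw [← mul_inv]
  linarith

section PrettyGoodMeasurement

variable {n : Type*} [Fintype n] [DecidableEq n]

theorem two_mul_re_trace_sub_le_of_diagonal {B : Matrix n n ℂ} (hB : IsStarProjection B)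
    {μ : n → ℝ} (hle : (diagonal (fun i => (μ i : ℂ)) - B).PosSemidef) :
    2 * B.trace.re - (diagonal (fun i => (μ i : ℂ)) * B).trace.re ≤
      (diagonal (fun i => ((√(μ i))⁻¹ : ℂ)) * B * diagonal (fun i => ((√(μ i))⁻¹ : ℂ)) *
        B).trace.re := by
  set β : n → n → ℝ := fun i j => Complex.normSq (B i j)
  have hconj : ∀ i j, B j i = star (B i j) := fun i j =>
    (IsHermitian.apply hB.isSelfAdjoint j i).symm
  have hdiag : ∀ i, (B i i).re = ∑ j, β i j := fun i => by
    rw [← hB.isIdempotentElem.eq, mul_apply, Complex.re_sum]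
    refine Finset.sum_congr rfl fun j _ => ?_
    rw [hconj i j, Complex.star_def, Complex.mul_conj, Complex.ofReal_re]
  have hsymm : ∀ i j, β i j = β j i := fun i j => by
    simp only [β, hconj j i, Complex.star_def, Complex.normSq_conj]
  have hβ_le : ∀ i j, β i j ≤ μ i := fun i j => by
    have h := (Complex.le_def.1 (hle.diag_nonneg (i := i))).1
    rw [Matrix.sub_apply, diagonal_apply_eq, Complex.sub_re, Complex.ofReal_re, hdiag,
      Complex.zero_re, sub_nonneg] at h
    exact (Finset.single_le_sum (fun j _ => Complex.normSq_nonneg _) (Finset.mem_univ j)).trans h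
  have htrB : B.trace.re = ∑ i, ∑ j, β i j := by
    rw [trace, Complex.re_sum]; exact Finset.sum_congr rfl fun i _ => hdiag i
  have htrμB : (diagonal (fun i => (μ i : ℂ)) * B).trace.re = ∑ i, ∑ j, μ i * β i j := by
    simp only [trace, diag, diagonal_mul, Complex.re_sum, Complex.re_ofReal_mul, hdiag,
      Finset.mul_sum]
  have htrμB' : ∑ i, ∑ j, μ i * β i j = ∑ i, ∑ j, μ j * β i j := by
    rw [Finset.sum_comm]; simp only [hsymm]
  have htrDBDB : (diagonal (fun i => ((√(μ i))⁻¹ : ℂ)) * B * diagonal (fun i => ((√(μ i))⁻¹ : ℂ)) *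
      B).trace.re = ∑ i, ∑ j, (√(μ i))⁻¹ * (√(μ j))⁻¹ * β i j := by
    rw [trace, Complex.re_sum]
    refine Finset.sum_congr rfl fun i _ => ?_
    rw [diag_apply, mul_apply, Complex.re_sum]
    refine Finset.sum_congr rfl fun j _ => ?_
    rw [mul_diagonal, diagonal_mul, hconj i j, Complex.star_def,
      ← Complex.ofReal_re (_ * _ * β i j)]
    congr 1
    simp only [β, Complex.ofReal_mul, ← Complex.mul_conj]
    push_cast
    ring
  calc 2 * B.trace.re - (diagonal (fun i => (μ i : ℂ)) * B).trace.re
      = ∑ i, ∑ j, (2 - (μ i + μ j) / 2) * β i j := by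
        rw [htrB, htrμB]
        have h : ∑ i, ∑ j, (2 - (μ i + μ j) / 2) * β i j =
            2 * ∑ i, ∑ j, β i j - (∑ i, ∑ j, μ i * β i j + ∑ i, ∑ j, μ j * β i j) / 2 := by
          simp only [Finset.mul_sum, Finset.sum_div, ← Finset.sum_add_distrib,
            ← Finset.sum_sub_distrib]
          exact Finset.sum_congr rfl fun i _ => Finset.sum_congr rfl fun j _ => by ring
        rw [h, ← htrμB']
        ring
    _ ≤ _ := by
      rw [htrDBDB]
      exact Finset.sum_le_sum fun i _ => Finset.sum_le_sum fun j _ =>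
        two_sub_mul_le_inv_sqrt_mul_inv_sqrt_mul (Complex.normSq_nonneg _) (hβ_le i j)
          (hsymm i j ▸ hβ_le j i)

theorem two_mul_re_trace_sub_le_re_trace_pinvSqrt {P S : Matrix n n ℂ} (hP : IsStarProjection P)
    (hPS : (S - P).PosSemidef) :
    2 * P.trace.re - (S * P).trace.re ≤ (pinvSqrt S * P * pinvSqrt S * P).trace.re := by
  have hS : S.IsHermitian := by
    simpa using hPS.isHermitian.add hP.posSemidef.isHermitian
  set φ := Unitary.conjStarAlgAut ℂ _ hS.eigenvectorUnitary
  have htrace : ∀ X, (φ X).trace = X.trace := fun X => by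
    rw [Unitary.conjStarAlgAut_apply, trace_mul_cycle, Unitary.coe_star_mul_self, one_mul]
  have hpinv : pinvSqrt S = φ (diagonal fun i => ((√(hS.eigenvalues i))⁻¹ : ℂ)) := by
    rw [pinvSqrt, dif_pos hS]; rfl
  have hSφ : S = φ (diagonal fun i => (hS.eigenvalues i : ℂ)) := hS.spectral_theorem
  obtain ⟨B, rfl⟩ : ∃ B, P = φ B := ⟨φ.symm P, (φ.apply_symm_apply P).symm⟩
  have hB : IsStarProjection B := by simpa using hP.map φ.symm
  have hle : ((diagonal fun i => (hS.eigenvalues i : ℂ)) - B).PosSemidef := by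
    rwa [hSφ, ← map_sub, Unitary.conjStarAlgAut_apply,
      (Unitary.isUnit_coe).posSemidef_star_right_conjugate_iff] at hPS
  have hSB : (S * φ B).trace = ((diagonal fun i => (hS.eigenvalues i : ℂ)) * B).trace := by
    rw [← htrace ((diagonal _) * B), map_mul, ← hSφ]
  rw [hpinv, ← map_mul, ← map_mul, ← map_mul, htrace, htrace, hSB]
  exact two_mul_re_trace_sub_le_of_diagonal hB hle

theorem re_trace_pgm_error_le {P S : Matrix n n ℂ} (hP : IsStarProjection P)
    (hPS : (S - P).PosSemidef) :
    (((1 - pinvSqrt S * P * pinvSqrt S) * P).trace).re ≤ (S * P).trace.re - P.trace.re := by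
  have h := two_mul_re_trace_sub_le_re_trace_pinvSqrt hP hPS
  rw [sub_mul, one_mul, trace_sub, Complex.sub_re]
  linarith

theorem re_trace_pgm_error_le_sum {ι : Type*} [DecidableEq ι] {s : Finset ι}
    {P : ι → Matrix n n ℂ} (hP : ∀ i ∈ s, IsStarProjection (P i)) {i : ι} (hi : i ∈ s) :
    (((1 - pinvSqrt (∑ j ∈ s, P j) * P i * pinvSqrt (∑ j ∈ s, P j)) * P i).trace).re ≤
      ∑ j ∈ s.erase i, ((P j * P i).trace).re := by
  have hsum : ∑ j ∈ s, P j = ∑ j ∈ s.erase i, P j + P i := (Finset.sum_erase_add s P hi).symm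
  refine (re_trace_pgm_error_le (hP i hi) ?_).trans_eq ?_
  · rw [hsum, add_sub_cancel_right]
    exact posSemidef_sum _ fun j hj => (hP j (Finset.mem_of_mem_erase hj)).posSemidef
  · rw [hsum, add_mul, (hP i hi).isIdempotentElem.eq, trace_add, Complex.add_re, Finset.sum_mul,
      trace_sum, Complex.re_sum, add_sub_cancel_right]

end PrettyGoodMeasurement

theorem Subgroup.card_inf_eq_one_of_card_eq_prime {G : Type*} [Group G] {p : ℕ} (hp : p.Prime)
    {H K : Subgroup G} (hH : Nat.card H = p) (hK : Nat.card K = p) (hne : H ≠ K) :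
    Nat.card ↥(H ⊓ K) = 1 := by
  have : Finite H := Nat.finite_of_card_ne_zero (hH ▸ hp.ne_zero)
  have : Finite K := Nat.finite_of_card_ne_zero (hK ▸ hp.ne_zero)
  refine ((hp.eq_one_or_self_of_dvd _ (hH ▸ card_dvd_of_le inf_le_left)).resolve_right
    fun h => hne ?_)
  rw [← eq_of_le_of_card_ge inf_le_left (hH.trans h.symm).le,
    eq_of_le_of_card_ge inf_le_right (hK.trans h.symm).le]

section CosetProjection

variable {G : Type*} [Group G] [Fintype G]

def cosetProj (H : Subgroup G) : Matrix G G ℂ :=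
  ((Fintype.card G : ℂ) / (Nat.card H : ℂ)) • cosetState H

open Classical in
theorem cosetProj_apply (H : Subgroup G) (x y : G) :
    cosetProj H x y = if x⁻¹ * y ∈ H then (Nat.card H : ℂ)⁻¹ else 0 := by
  have hG : (Fintype.card G : ℂ) ≠ 0 := Nat.cast_ne_zero.2 Fintype.card_ne_zero
  simp only [cosetProj, cosetState, Matrix.smul_apply, smul_eq_mul, mul_ite, mul_zero]
  congr 1
  field_simp

theorem cosetState_eq_smul_cosetProj (H : Subgroup G) :
    cosetState H = ((Nat.card H : ℂ) / Fintype.card G) • cosetProj H := by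
  have hG : (Fintype.card G : ℂ) ≠ 0 := Nat.cast_ne_zero.2 Fintype.card_ne_zero
  have hH : (Nat.card H : ℂ) ≠ 0 := Nat.cast_ne_zero.2 Nat.card_pos.ne'
  rw [cosetProj, smul_smul, div_mul_div_cancel₀' hH, div_self hG, one_smul]

open Classical in
theorem cosetProj_mul_apply (H K : Subgroup G) (x y : G) :
    (cosetProj H * cosetProj K) x y =
      (Finset.univ.filter fun z => z ∈ H ∧ z⁻¹ * (x⁻¹ * y) ∈ K).card /
        ((Nat.card H : ℂ) * Nat.card K) := by
  rw [mul_apply, ← Equiv.sum_comp (Equiv.mulLeft x)]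
  simp only [cosetProj_apply, Equiv.coe_mulLeft, inv_mul_cancel_left, ite_mul, mul_ite, zero_mul,
    mul_zero, ← ite_and]
  rw [Finset.sum_ite, Finset.sum_const_zero, add_zero, Finset.sum_const, nsmul_eq_mul,
    div_eq_mul_inv, mul_inv]
  congr 3
  ext z
  simp [and_comm, mul_assoc]

theorem isStarProjection_cosetProj (H : Subgroup G) : IsStarProjection (cosetProj H) := by
  classical
  refine isStarProjection_iff'.2 ⟨?_, ?_⟩
  · ext x y
    have hH : (Nat.card H : ℂ) ≠ 0 := Nat.cast_ne_zero.2 Nat.card_pos.ne'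
    rw [cosetProj_mul_apply, cosetProj_apply]
    split_ifs with hxy
    · have : (Finset.univ.filter fun z => z ∈ H ∧ z⁻¹ * (x⁻¹ * y) ∈ H) =
          Finset.univ.filter (· ∈ H) :=
        Finset.filter_congr fun z _ => by simp [H.mul_mem_cancel_right hxy]
      rw [this, ← Fintype.card_subtype, ← Nat.card_eq_fintype_card]
      field_simp
    · have : (Finset.univ.filter fun z => z ∈ H ∧ z⁻¹ * (x⁻¹ * y) ∈ H) = ∅ :=
        Finset.filter_false_of_mem fun z _ ⟨hz, hzxy⟩ =>
          hxy (by simpa using H.mul_mem hz hzxy)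
      simp [this]
  · ext x y
    simp only [star_apply, cosetProj_apply, ← inv_mem_iff (x := y⁻¹ * x), _root_.mul_inv_rev,
      inv_inv]
    split_ifs <;> simp

theorem trace_cosetProj_mul (H K : Subgroup G) :
    (cosetProj H * cosetProj K).trace =
      Fintype.card G * Nat.card ↥(H ⊓ K) / ((Nat.card H : ℂ) * Nat.card K) := by
  classical
  simp only [trace, diag, cosetProj_mul_apply, inv_mul_cancel, mul_one, Subgroup.inv_mem_iff,
    Finset.sum_const, Finset.card_univ, nsmul_eq_mul, mul_div_assoc]
  congr
  simp only [← Subgroup.mem_inf]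
  rw [← Fintype.card_subtype, ← Nat.card_eq_fintype_card]

theorem re_trace_mul_tensorPow_cosetState {k : ℕ} (X : Matrix (Fin k → G) (Fin k → G) ℂ)
    (H : Subgroup G) :
    (X * tensorPow (cosetState H) k).trace.re =
      ((Nat.card H : ℝ) / Fintype.card G) ^ k * (X * tensorPow (cosetProj H) k).trace.re := by
  rw [cosetState_eq_smul_cosetProj, tensorPow_smul, Matrix.mul_smul, trace_smul, smul_eq_mul,
    ← Complex.re_ofReal_mul]
  push_cast
  rfl

end CosetProjection

section CosetIdentification

variable {G : Type*} [Group G] [Fintype G] [DecidableEq G] {𝓗 : Finset (Subgroup G)} {p : ℕ}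

theorem sum_re_trace_mul_tensorPow_cosetState_le (horder : ∀ H ∈ 𝓗, Nat.card H = p) {k : ℕ}
    {M : Subgroup G → Matrix (Fin k → G) (Fin k → G) ℂ} (hM : ∀ H ∈ 𝓗, (M H).PosSemidef)
    (hsum : ∑ H ∈ 𝓗, M H = 1) :
    ∑ H ∈ 𝓗, (M H * tensorPow (cosetState H) k).trace.re ≤ (p : ℝ) ^ k := by
  have hG : (Fintype.card G : ℝ) ≠ 0 := Nat.cast_ne_zero.2 Fintype.card_ne_zero
  calc ∑ H ∈ 𝓗, (M H * tensorPow (cosetState H) k).trace.re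
      = ((p : ℝ) / Fintype.card G) ^ k * ∑ H ∈ 𝓗, (M H * tensorPow (cosetProj H) k).trace.re := by
        rw [Finset.mul_sum]
        exact Finset.sum_congr rfl fun H hH => by
          rw [re_trace_mul_tensorPow_cosetState, horder H hH]
    _ ≤ ((p : ℝ) / Fintype.card G) ^ k * Fintype.card (Fin k → G) := by
        gcongr
        exact sum_re_trace_mul_le_card hM hsum fun H _ =>
          (isStarProjection_cosetProj H).tensorPow k
    _ = (p : ℝ) ^ k := by
        rw [Fintype.card_fun, Fintype.card_fin, Nat.cast_pow, ← mul_pow, div_mul_cancel₀ _ hG]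

theorem re_trace_pgm_error_cosetState_le (hp : p.Prime) (horder : ∀ H ∈ 𝓗, Nat.card H = p)
    (k : ℕ) {H : Subgroup G} (hH : H ∈ 𝓗) :
    ((((1 : Matrix (Fin k → G) (Fin k → G) ℂ) -
        pinvSqrt (∑ K ∈ 𝓗, tensorPow (cosetProj K) k) * tensorPow (cosetProj H) k *
          pinvSqrt (∑ K ∈ 𝓗, tensorPow (cosetProj K) k)) *
        tensorPow (cosetState H) k).trace).re ≤ ((𝓗.card : ℝ) - 1) / (p : ℝ) ^ k := by
  classical
  have hG : (Fintype.card G : ℝ) ≠ 0 := Nat.cast_ne_zero.2 Fintype.card_ne_zero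
  have hp0 : (p : ℝ) ≠ 0 := Nat.cast_ne_zero.2 hp.ne_zero
  have hoverlap : ∀ K ∈ 𝓗.erase H,
      ((tensorPow (cosetProj K) k * tensorPow (cosetProj H) k).trace).re =
        ((Fintype.card G : ℝ) / p ^ 2) ^ k := fun K hK => by
    obtain ⟨hKH, hK⟩ := Finset.mem_erase.1 hK
    rw [tensorPow_mul, trace_tensorPow, trace_cosetProj_mul,
      Subgroup.card_inf_eq_one_of_card_eq_prime hp (horder K hK) (horder H hH) hKH,
      horder K hK, horder H hH, ← Complex.ofReal_re (_ ^ k)]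
    push_cast
    ring_nf
  have hratio : (p : ℝ) / Fintype.card G * (Fintype.card G / p ^ 2) = (p : ℝ)⁻¹ := by
    field_simp
  rw [re_trace_mul_tensorPow_cosetState, horder H hH]
  calc ((p : ℝ) / Fintype.card G) ^ k * _
      ≤ ((p : ℝ) / Fintype.card G) ^ k *
          ∑ K ∈ 𝓗.erase H, ((tensorPow (cosetProj K) k * tensorPow (cosetProj H) k).trace).re := by
        gcongr
        exact re_trace_pgm_error_le_sum (fun K _ => (isStarProjection_cosetProj K).tensorPow k) hH
    _ = ((𝓗.card : ℝ) - 1) / (p : ℝ) ^ k := by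
        rw [Finset.sum_congr rfl hoverlap, Finset.sum_const, nsmul_eq_mul,
          Finset.card_erase_of_mem hH, Nat.cast_pred (Finset.card_pos.2 ⟨H, hH⟩),
          mul_left_comm, ← mul_pow, hratio, inv_pow, div_eq_mul_inv]

end CosetIdentification

theorem log_div_log_sub_log_div_log_le {N a b : ℝ} {k : ℕ} (hN : 0 < N) (ha : 0 < a)
    (hb : 1 < b) (h : N ≤ a * b ^ k) :
    Real.log N / Real.log b - Real.log a / Real.log b ≤ k := by
  rw [← sub_div, div_le_iff₀ (Real.log_pos hb), sub_le_iff_le_add', ← Real.log_pow,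
    ← Real.log_mul ha.ne' (pow_pos (zero_lt_one.trans hb) k).ne']
  exact Real.log_le_log hN h

theorem prime_order_sample_complexity_general {G : Type*} [Group G] [Fintype G] [DecidableEq G]
    (𝓗 : Finset (Subgroup G)) (p : ℕ) (hp : p.Prime)
    (horder : ∀ H ∈ 𝓗, Nat.card ↥H = p) :
    (∀ k : ℕ, ∀ M : Subgroup G → Matrix (Fin k → G) (Fin k → G) ℂ,
        (∀ H ∈ 𝓗, (M H).PosSemidef) → (∑ H ∈ 𝓗, M H = 1) →
        (2/3 : ℝ) ≤
          (1 / (𝓗.card : ℝ)) * ∑ H ∈ 𝓗, ((M H * tensorPow (cosetState H) k).trace).re →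
        Real.log (𝓗.card : ℝ) / Real.log (p : ℝ) - Real.log (3/2) / Real.log (p : ℝ) ≤ (k : ℝ)) ∧
    (∀ k : ℕ, ∀ H ∈ 𝓗,
        ((((1 : Matrix (Fin k → G) (Fin k → G) ℂ) -
            pinvSqrt (∑ K ∈ 𝓗,
                tensorPow (((Fintype.card G : ℂ) / (Nat.card ↥K : ℂ)) • cosetState K) k) *
              tensorPow (((Fintype.card G : ℂ) / (Nat.card ↥H : ℂ)) • cosetState H) k *
              pinvSqrt (∑ K ∈ 𝓗,
                tensorPow (((Fintype.card G : ℂ) / (Nat.card ↥K : ℂ)) • cosetState K) k)) *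
          tensorPow (cosetState H) k).trace).re ≤ 4 * (𝓗.card : ℝ) / (p : ℝ) ^ k) := by
  refine ⟨fun k M hM hsum havg => ?_, fun k H hH => ?_⟩
  · have hsucc := sum_re_trace_mul_tensorPow_cosetState_le horder hM hsum
    have hN : (0 : ℝ) < 𝓗.card := by
      rcases 𝓗.eq_empty_or_nonempty with rfl | hne
      · norm_num at havg
      · exact_mod_cast hne.card_pos
    rw [one_div, inv_mul_eq_div, le_div_iff₀ hN] at havg
    exact log_div_log_sub_log_div_log_le hN (by norm_num) (by exact_mod_cast hp.one_lt)
      (by linarith)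
  · calc _ ≤ ((𝓗.card : ℝ) - 1) / (p : ℝ) ^ k := re_trace_pgm_error_cosetState_le hp horder k hH
      _ ≤ 4 * 𝓗.card / (p : ℝ) ^ k := by gcongr; linarith

/-- Tight sample complexity for candidate subgroups of common prime order p:
any POVM succeeding with probability ≥ 2/3 needs k ≥ log|𝓗|/log p − log(3/2)/log p copies,
and the pretty good measurement on k copies errs with probability at most 4|𝓗|/p^k. -/
theorem prime_order_sample_complexity {G : Type*} [Group G] [Fintype G] [DecidableEq G]
    (𝓗 : Finset (Subgroup G)) (p : ℕ) (hp : p.Prime)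
    (horder : ∀ H ∈ 𝓗, Nat.card ↥H = p) (hcard : 2 ≤ 𝓗.card) :
    (∀ k : ℕ, ∀ M : Subgroup G → Matrix (Fin k → G) (Fin k → G) ℂ,
        (∀ H ∈ 𝓗, (M H).PosSemidef) → (∑ H ∈ 𝓗, M H = 1) →
        (2/3 : ℝ) ≤
          (1 / (𝓗.card : ℝ)) * ∑ H ∈ 𝓗, ((M H * tensorPow (cosetState H) k).trace).re →
        Real.log (𝓗.card : ℝ) / Real.log (p : ℝ) - Real.log (3/2) / Real.log (p : ℝ) ≤ (k : ℝ)) ∧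
    (∀ k : ℕ, ∀ H ∈ 𝓗,
        ((((1 : Matrix (Fin k → G) (Fin k → G) ℂ) -
            pinvSqrt (∑ K ∈ 𝓗,
                tensorPow (((Fintype.card G : ℂ) / (Nat.card ↥K : ℂ)) • cosetState K) k) *
              tensorPow (((Fintype.card G : ℂ) / (Nat.card ↥H : ℂ)) • cosetState H) k *
              pinvSqrt (∑ K ∈ 𝓗,
                tensorPow (((Fintype.card G : ℂ) / (Nat.card ↥K : ℂ)) • cosetState K) k)) *
          tensorPow (cosetState H) k).trace).re ≤ 4 * (𝓗.card : ℝ) / (p : ℝ) ^ k) :=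
  prime_order_sample_complexity_general 𝓗 p hp horder
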